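/- arXiv:2301.11124 — 3 statements merged into one kernel-verified Lean document; each statement's English description precedes it below -/
import Mathlib

section
/- Let u, v be unit vectors in ℝ^d, let 0 < σ ≤ 1, θ = 1 - σ², c = uᵀv. Define Σ_u = Id - uuᵀ + σ²uuᵀ and Σ_v = Id - vvᵀ + σ²vvᵀ. Then det(Σ_u)·det(Σ_v)·det(Σ_u⁻¹ + Σ_v⁻¹ - Id) = 1 - θ²c². -/
/-!
Writing `Σ_u = 1 - θ uuᵀ` and `Σ_v = 1 - θ vvᵀ`, the product of the three determinants is
`det (Σ_u (Σ_u⁻¹ + Σ_v⁻¹ - 1) Σ_v) = det (Σ_u + Σ_v - Σ_u Σ_v) = det (1 - θ² uuᵀvvᵀ)`,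
and `θ² uuᵀvvᵀ = θ² c · u vᵀ` has rank one, so the matrix determinant lemma gives `1 - θ² c²`.
-/

open Matrix

namespace Matrix

variable {n α : Type*} [Fintype n] [DecidableEq n]

section CommRing

variable [CommRing α]

theorem det_one_sub_vecMulVec (x y : n → α) : det (1 - vecMulVec x y) = 1 - y ⬝ᵥ x := by
  rw [sub_eq_add_neg, ← neg_vecMulVec, vecMulVec_eq Unit, det_one_add_replicateCol_mul_replicateRow,
    dotProduct_neg, ← sub_eq_add_neg]

theorem det_one_sub_smul_vecMulVec_self {u : n → α} (hu : u ⬝ᵥ u = 1) (t : α) :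
    det (1 - t • vecMulVec u u) = 1 - t := by
  rw [← smul_vecMulVec, det_one_sub_vecMulVec, dotProduct_smul, hu, smul_eq_mul, mul_one]

theorem det_one_sub_smul_vecMulVec_mul_smul_vecMulVec (s t : α) (u v : n → α) :
    det (1 - s • vecMulVec u u * t • vecMulVec v v) = 1 - s * t * (u ⬝ᵥ v) ^ 2 := by
  rw [← smul_vecMulVec, ← smul_vecMulVec, vecMulVec_mul_vecMulVec, det_one_sub_vecMulVec]
  simp only [smul_dotProduct, dotProduct_smul, dotProduct_comm v u, smul_eq_mul]
  ring

end CommRing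

theorem det_mul_det_mul_det_inv_add_inv_sub_one [Field α] {A B : Matrix n n α}
    (hA : IsUnit A.det) (hB : IsUnit B.det) :
    A.det * B.det * (A⁻¹ + B⁻¹ - 1).det = (A + B - A * B).det := by
  have hprod : A * (A⁻¹ + B⁻¹ - 1) * B = A + B - A * B := by
    simp only [Matrix.mul_add, Matrix.mul_sub, Matrix.add_mul, Matrix.sub_mul, Matrix.mul_one,
      mul_nonsing_inv _ hA, nonsing_inv_mul_cancel_right _ _ hB, Matrix.one_mul]
    abel
  rw [mul_right_comm, ← det_mul, ← det_mul, hprod]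

end Matrix

theorem det_product_formula {d : ℕ} (u v : Fin d → ℝ)
    (hu : ∑ i, u i ^ 2 = 1) (hv : ∑ i, v i ^ 2 = 1)
    (σ : ℝ) (hσ : σ ∈ Set.Ioc (0 : ℝ) 1)
    (θ c : ℝ) (hθ : θ = 1 - σ ^ 2) (hc : c = ∑ i, u i * v i)
    (Su Sv : Matrix (Fin d) (Fin d) ℝ)
    (hSu : Su = 1 - vecMulVec u u + σ ^ 2 • vecMulVec u u)
    (hSv : Sv = 1 - vecMulVec v v + σ ^ 2 • vecMulVec v v) :
    Su.det * Sv.det * (Su⁻¹ + Sv⁻¹ - 1).det = 1 - θ ^ 2 * c ^ 2 := by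
  have hu' : u ⬝ᵥ u = 1 := by simpa only [dotProduct, sq] using hu
  have hv' : v ⬝ᵥ v = 1 := by simpa only [dotProduct, sq] using hv
  have hc' : u ⬝ᵥ v = c := hc.symm
  have hSu' : Su = 1 - θ • vecMulVec u u := by rw [hSu, hθ, sub_smul, one_smul]; abel
  have hSv' : Sv = 1 - θ • vecMulVec v v := by rw [hSv, hθ, sub_smul, one_smul]; abel
  have hσ2 : IsUnit (1 - θ) := by rw [hθ, sub_sub_cancel]; exact (pow_pos hσ.1 2).ne'.isUnit
  have hSu_det : IsUnit Su.det := by rwa [hSu', det_one_sub_smul_vecMulVec_self hu']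
  have hSv_det : IsUnit Sv.det := by rwa [hSv', det_one_sub_smul_vecMulVec_self hv']
  have hcombine : ∀ P Q : Matrix (Fin d) (Fin d) ℝ, (1 - P) + (1 - Q) - (1 - P) * (1 - Q) = 1 - P * Q :=
    fun P Q => by noncomm_ring
  rw [det_mul_det_mul_det_inv_add_inv_sub_one hSu_det hSv_det, hSu', hSv', hcombine,
    det_one_sub_smul_vecMulVec_mul_smul_vecMulVec, hc', ← sq]
end

section
/- Let x_u, x_v be i.i.d. Bernoulli-Rademacher random variables with parameter ρ ∈ (0,1], and let g(x_u, x_v) = exp((2x_u x_v c - θ(x_u² + x_v²)c²)/(2-2θ²c²))/√(1-θ²c²) for fixed θ ∈ (0,1) and c with θ²c² < 1. Then E[g(x_u,x_v)] = (1/√(1-θ²c²))·[(1-ρ)² + 2ρ(1-ρ)exp(-(1/ρ)·θc²/(2-2θ²c²)) + (ρ²/2)exp(c/(ρ(1+θc))) + (ρ²/2)exp(-c/(ρ(1-θc)))]. -/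
/-!
Both factors are three-point measures, so the product measure is a combination of nine Dirac
masses and the expectation is a finite sum. At the atoms `x, y ∈ {±1/√ρ, 0}` the exponent only
depends on `x * y ∈ {1/ρ, -1/ρ, 0}` and `x ^ 2 + y ^ 2`, and the nine terms collapse to four.
-/

open MeasureTheory

/-- The Bernoulli-Rademacher measure with parameter `ρ`. -/
noncomputable def bernoulliRademacher (ρ : ℝ) : Measure ℝ :=
  (ENNReal.ofReal (ρ / 2)) • Measure.dirac (1 / Real.sqrt ρ)
    + (ENNReal.ofReal (ρ / 2)) • Measure.dirac (-(1 / Real.sqrt ρ))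
    + (ENNReal.ofReal (1 - ρ)) • Measure.dirac 0

open scoped ENNReal

namespace MeasureTheory

variable {ι κ α β E : Type*} [Fintype ι] [Fintype κ] [MeasurableSpace α] [MeasurableSpace β]
  [NormedAddCommGroup E] [NormedSpace ℝ E] [CompleteSpace E]

theorem integral_sum_smul_dirac [MeasurableSingletonClass α] {w : ι → ℝ≥0∞} (hw : ∀ i, w i ≠ ∞)
    (a : ι → α) (f : α → E) :
    ∫ x, f x ∂(∑ i, w i • Measure.dirac (a i)) = ∑ i, (w i).toReal • f (a i) := by
  rw [integral_finsetSum_measure fun i _ ↦ (integrable_dirac enorm_lt_top).smul_measure (hw i)]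
  simp only [integral_smul_measure, integral_dirac]

theorem Measure.sum_smul_dirac_prod_sum_smul_dirac (w : ι → ℝ≥0∞) (v : κ → ℝ≥0∞) (a : ι → α)
    (b : κ → β) :
    (∑ i, w i • dirac (a i)).prod (∑ j, v j • dirac (b j))
      = ∑ p : ι × κ, (w p.1 * v p.2) • dirac (a p.1, b p.2) := by
  simp only [← sum_fintype, prod_sum, prod_smul_left, prod_smul_right, dirac_prod_dirac,
    smul_smul, mul_comm]

theorem integral_prod_sum_smul_dirac [MeasurableSingletonClass α] [MeasurableSingletonClass β]
    {w : ι → ℝ≥0∞} {v : κ → ℝ≥0∞} (hw : ∀ i, w i ≠ ∞) (hv : ∀ j, v j ≠ ∞)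
    (a : ι → α) (b : κ → β) (f : α × β → E) :
    ∫ p, f p ∂((∑ i, w i • Measure.dirac (a i)).prod (∑ j, v j • Measure.dirac (b j)))
      = ∑ i, ∑ j, ((w i).toReal * (v j).toReal) • f (a i, b j) := by
  rw [Measure.sum_smul_dirac_prod_sum_smul_dirac,
    integral_sum_smul_dirac (w := fun p : ι × κ ↦ w p.1 * v p.2)
      (fun p ↦ ENNReal.mul_ne_top (hw p.1) (hv p.2)) (fun p : ι × κ ↦ (a p.1, b p.2)),
    Fintype.sum_prod_type]
  simp only [ENNReal.toReal_mul]

end MeasureTheory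

noncomputable def bernoulliRademacherWeight (ρ : ℝ) : Fin 3 → ℝ := ![ρ / 2, ρ / 2, 1 - ρ]

noncomputable def bernoulliRademacherAtom (ρ : ℝ) : Fin 3 → ℝ :=
  ![1 / Real.sqrt ρ, -(1 / Real.sqrt ρ), 0]

theorem bernoulliRademacher_eq_sum (ρ : ℝ) :
    bernoulliRademacher ρ = ∑ i, ENNReal.ofReal (bernoulliRademacherWeight ρ i) •
      Measure.dirac (bernoulliRademacherAtom ρ i) := by
  simp [bernoulliRademacher, bernoulliRademacherWeight, bernoulliRademacherAtom, Fin.sum_univ_three]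

theorem bernoulliRademacherWeight_nonneg {ρ : ℝ} (h₀ : 0 ≤ ρ) (h₁ : ρ ≤ 1) (i : Fin 3) :
    0 ≤ bernoulliRademacherWeight ρ i := by
  fin_cases i <;> simp [bernoulliRademacherWeight] <;> linarith

theorem integral_bernoulliRademacher_prod {ρ : ℝ} (h₀ : 0 ≤ ρ) (h₁ : ρ ≤ 1) (f : ℝ × ℝ → ℝ) :
    ∫ p, f p ∂((bernoulliRademacher ρ).prod (bernoulliRademacher ρ))
      = ∑ i, ∑ j, bernoulliRademacherWeight ρ i * bernoulliRademacherWeight ρ j *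
          f (bernoulliRademacherAtom ρ i, bernoulliRademacherAtom ρ j) := by
  rw [bernoulliRademacher_eq_sum, integral_prod_sum_smul_dirac (fun _ ↦ ENNReal.ofReal_ne_top)
    (fun _ ↦ ENNReal.ofReal_ne_top)]
  simp only [ENNReal.toReal_ofReal (bernoulliRademacherWeight_nonneg h₀ h₁ _), smul_eq_mul]

section Exponent

variable {ρ θ c x y : ℝ}

theorem exponent_eq_of_mul_eq_inv (hρ : ρ ≠ 0) (hθc : θ ^ 2 * c ^ 2 ≠ 1)
    (hxy : x * y = 1 / ρ) (hsq : x ^ 2 + y ^ 2 = 2 / ρ) :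
    (2 * x * y * c - θ * (x ^ 2 + y ^ 2) * c ^ 2) / (2 - 2 * θ ^ 2 * c ^ 2)
      = c / (ρ * (1 + θ * c)) := by
  have hD : 2 - 2 * θ ^ 2 * c ^ 2 ≠ 0 := fun h ↦ hθc (by linarith)
  have hadd : 1 + θ * c ≠ 0 := fun h ↦ hθc (by linear_combination (θ * c - 1) * h)
  rw [mul_assoc 2 x, hxy, hsq, div_eq_div_iff hD (mul_ne_zero hρ hadd)]
  field_simp
  ring

theorem exponent_eq_of_mul_eq_neg_inv (hρ : ρ ≠ 0) (hθc : θ ^ 2 * c ^ 2 ≠ 1)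
    (hxy : x * y = -(1 / ρ)) (hsq : x ^ 2 + y ^ 2 = 2 / ρ) :
    (2 * x * y * c - θ * (x ^ 2 + y ^ 2) * c ^ 2) / (2 - 2 * θ ^ 2 * c ^ 2)
      = -c / (ρ * (1 - θ * c)) := by
  have hD : 2 - 2 * θ ^ 2 * c ^ 2 ≠ 0 := fun h ↦ hθc (by linarith)
  have hsub : 1 - θ * c ≠ 0 := fun h ↦ hθc (by linear_combination -(1 + θ * c) * h)
  rw [mul_assoc 2 x, hxy, hsq, div_eq_div_iff hD (mul_ne_zero hρ hsub)]
  field_simp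
  ring

theorem exponent_eq_of_mul_eq_zero (hxy : x * y = 0) (hsq : x ^ 2 + y ^ 2 = 1 / ρ) :
    (2 * x * y * c - θ * (x ^ 2 + y ^ 2) * c ^ 2) / (2 - 2 * θ ^ 2 * c ^ 2)
      = -(1 / ρ) * (θ * c ^ 2 / (2 - 2 * θ ^ 2 * c ^ 2)) := by
  rw [mul_assoc 2 x, hxy, hsq]
  ring

end Exponent

theorem expectation_inner_product_BR_general (ρ : ℝ) (hρ : ρ ∈ Set.Ioc (0 : ℝ) 1)
    (θ c : ℝ) (hc : θ ^ 2 * c ^ 2 < 1) :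
    (∫ p : ℝ × ℝ,
        Real.exp ((2 * p.1 * p.2 * c - θ * (p.1 ^ 2 + p.2 ^ 2) * c ^ 2)
            / (2 - 2 * θ ^ 2 * c ^ 2)) / Real.sqrt (1 - θ ^ 2 * c ^ 2)
        ∂((bernoulliRademacher ρ).prod (bernoulliRademacher ρ)))
      = (1 / Real.sqrt (1 - θ ^ 2 * c ^ 2)) *
          ((1 - ρ) ^ 2
            + 2 * ρ * (1 - ρ) * Real.exp (-(1 / ρ) * (θ * c ^ 2 / (2 - 2 * θ ^ 2 * c ^ 2)))
            + (ρ ^ 2 / 2) * Real.exp (c / (ρ * (1 + θ * c)))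
            + (ρ ^ 2 / 2) * Real.exp (-c / (ρ * (1 - θ * c)))) := by
  obtain ⟨hρ₀, hρ₁⟩ := hρ
  have hs : (1 / Real.sqrt ρ) ^ 2 = 1 / ρ := by rw [div_pow, one_pow, Real.sq_sqrt hρ₀.le]
  rw [integral_bernoulliRademacher_prod hρ₀.le hρ₁]
  simp only [Fin.sum_univ_three, bernoulliRademacherWeight, bernoulliRademacherAtom,
    Matrix.cons_val_zero, Matrix.cons_val_one, Matrix.cons_val_two, Matrix.head_cons,
    Matrix.tail_cons]
  -- Each rewrite hits the first remaining exponent, at `(s, s), (s, -s), (s, 0), (-s, s), …`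
  -- for `s = 1 / √ρ`; its hypotheses on `x * y` and `x ^ 2 + y ^ 2` are left as goals that are
  -- linear in `s ^ 2`. The exponent at `(0, 0)` is left to the first goal.
  rw [exponent_eq_of_mul_eq_inv hρ₀.ne' hc.ne, exponent_eq_of_mul_eq_neg_inv hρ₀.ne' hc.ne,
    exponent_eq_of_mul_eq_zero, exponent_eq_of_mul_eq_neg_inv hρ₀.ne' hc.ne,
    exponent_eq_of_mul_eq_inv hρ₀.ne' hc.ne, exponent_eq_of_mul_eq_zero,
    exponent_eq_of_mul_eq_zero, exponent_eq_of_mul_eq_zero]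
  · simp only [mul_zero, zero_mul, zero_pow two_ne_zero, add_zero, sub_self, zero_div,
      Real.exp_zero]
    ring
  all_goals ring_nf at hs ⊢ <;> linarith

theorem expectation_inner_product_BR (ρ : ℝ) (hρ : ρ ∈ Set.Ioc (0 : ℝ) 1)
    (θ c : ℝ) (hθ : θ ∈ Set.Ioo (0 : ℝ) 1) (hc : θ ^ 2 * c ^ 2 < 1) :
    (∫ p : ℝ × ℝ,
        Real.exp ((2 * p.1 * p.2 * c - θ * (p.1 ^ 2 + p.2 ^ 2) * c ^ 2)
            / (2 - 2 * θ ^ 2 * c ^ 2)) / Real.sqrt (1 - θ ^ 2 * c ^ 2)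
        ∂((bernoulliRademacher ρ).prod (bernoulliRademacher ρ)))
      = (1 / Real.sqrt (1 - θ ^ 2 * c ^ 2)) *
          ((1 - ρ) ^ 2
            + 2 * ρ * (1 - ρ) * Real.exp (-(1 / ρ) * (θ * c ^ 2 / (2 - 2 * θ ^ 2 * c ^ 2)))
            + (ρ ^ 2 / 2) * Real.exp (c / (ρ * (1 + θ * c)))
            + (ρ ^ 2 / 2) * Real.exp (-c / (ρ * (1 - θ * c)))) :=
  expectation_inner_product_BR_general ρ hρ θ c hc
end

section
/- Let d ≥ 2, k > 0, σ ∈ (0,1), θ = 1-σ², ρ > 0, and 0 ≤ c ≤ 1 - d^{-k}. Then exp(-(1/ρ)·θc²/(2-2θ²c²)) ≤ exp(σ²/(ρd^{-2k}))·exp(-(1/ρ)·c²/(2-2c²)). -/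
set_option maxHeartbeats 1000000 in
theorem exp_shift_quadratic (d k σ ρ c : ℝ) (hd : 2 ≤ d) (hk : 0 < k)
    (hσ : σ ∈ Set.Ioo (0 : ℝ) 1) (hρ : 0 < ρ)
    (hc0 : 0 ≤ c) (hc1 : c ≤ 1 - d ^ (-k)) (θ : ℝ) (hθ : θ = 1 - σ ^ 2) :
    Real.exp (-(1 / ρ) * (θ * c ^ 2 / (2 - 2 * θ ^ 2 * c ^ 2)))
      ≤ Real.exp (σ ^ 2 / (ρ * d ^ (-(2 * k)))) *
          Real.exp (-(1 / ρ) * (c ^ 2 / (2 - 2 * c ^ 2))) := by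
  obtain ⟨hσ0, hσ1⟩ := hσ
  have hd0 : (1:ℝ) ≤ d := by linarith
  set a := d ^ (-k) with ha
  have ha0 : 0 < a := Real.rpow_pos_of_pos (by linarith) _
  have ha1 : a ≤ 1 := Real.rpow_le_one_of_one_le_of_nonpos hd0 (by linarith)
  have hc1' : c < 1 := by linarith
  have hcc : 0 < 1 - c ^ 2 := by nlinarith
  have hθ0 : 0 < θ := by nlinarith
  have hθ1 : θ < 1 := by nlinarith
  have hθc : 0 < 1 - θ ^ 2 * c ^ 2 := by nlinarith
  have h2k : d ^ (-(2*k)) = a ^ 2 := by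
    rw [ha, ← Real.rpow_natCast (d ^ (-k)) 2, ← Real.rpow_mul (by linarith)]
    norm_num
    ring_nf
  have h1c2 : a ≤ 1 - c ^ 2 := by nlinarith
  have hθ2le : θ ^ 2 ≤ 1 := by nlinarith
  have hθc2 : a ≤ 1 - θ ^ 2 * c ^ 2 := by
    nlinarith [mul_nonneg (sub_nonneg.mpr hθ2le) (sq_nonneg c)]
  have p1 : (0:ℝ) < 2-2*c^2 := by linarith
  have p2 : (0:ℝ) < 2-2*θ^2*c^2 := by linarith
  have p3 : (0:ℝ) < 2*(1-θ^2*c^2)*(1-c^2) := by positivity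
  have d1 : (2-2*c^2) ≠ 0 := p1.ne'
  have d2 : (2-2*θ^2*c^2) ≠ 0 := p2.ne'
  have e1 : c^2/(2-2*c^2) - θ^2*c^2/(2-2*θ^2*c^2)
      = c^2*(1-θ^2)/(2*(1-θ^2*c^2)*(1-c^2)) := by
    rw [div_sub_div _ _ d1 d2, div_eq_div_iff (mul_pos p1 p2).ne' p3.ne']
    ring
  have e2 : c^2*(1-θ^2)/(2*(1-θ^2*c^2)*(1-c^2)) ≤ (2*σ^2)/(2*a^2) := by
    have hnum : c^2*(1-θ^2) ≤ 2*σ^2 := by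
      nlinarith [mul_nonneg (mul_nonneg (sq_nonneg σ) hcc.le)
        (show (0:ℝ) ≤ 2 - σ^2 by nlinarith)]
    have hden : 2*a^2 ≤ 2*(1-θ^2*c^2)*(1-c^2) := by
      nlinarith [mul_le_mul hθc2 h1c2 ha0.le (by linarith : (0:ℝ) ≤ 1-θ^2*c^2)]
    exact div_le_div₀ (by positivity) hnum (by positivity) hden
  have e3 : θ^2*c^2/(2-2*θ^2*c^2) ≤ θ*c^2/(2-2*θ^2*c^2) :=
    (div_le_div_iff_of_pos_right p2).mpr
      (by nlinarith [mul_nonneg (show (0:ℝ) ≤ θ - θ^2 by nlinarith) (sq_nonneg c)])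
  have key : c^2/(2-2*c^2) - θ*c^2/(2-2*θ^2*c^2) ≤ σ^2/a^2 := by
    have h22 : (2*σ^2)/(2*a^2) = σ^2/a^2 := by
      field_simp
    linarith [e1, e2, e3]
  rw [h2k, ← Real.exp_add, Real.exp_le_exp,
    show σ^2/(ρ*a^2) = (1/ρ)*(σ^2/a^2) by field_simp]
  have hρ' : (0:ℝ) ≤ 1/ρ := by positivity
  have h := mul_le_mul_of_nonneg_left key hρ'
  rw [mul_sub] at h
  linarith
end
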